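/- (Gessel–Stanton (5.23).) For every natural number n ≥ 1: ∑_{k=0}^{n} ((−n)_k (−1/3−2n)_k)/((2/3)_k · k!) · (−8)^k = (−27)^n (as complex, or rational, numbers). -/

import Mathlib

/-- Pochhammer symbol (shifted factorial) of a complex number. -/
noncomputable def poch (a : ℂ) (k : ℕ) : ℂ := ∏ j ∈ Finset.range k, (a + j)

lemma poch_zero (a : ℂ) : poch a 0 = 1 := by simp [poch]

lemma poch_succ (a : ℂ) (k : ℕ) : poch a (k+1) = poch a k * (a + k) := by
  simp [poch, Finset.prod_range_succ]

lemma poch_pred (a : ℂ) (k : ℕ) : poch (a-1) (k+1) = (a-1) * poch a k := by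
  rw [poch, poch, Finset.prod_range_succ']
  simp only [Nat.cast_zero, add_zero]
  rw [mul_comm]; congr 1
  apply Finset.prod_congr rfl
  intro j _; push_cast; ring

lemma poch_neg_nat (n : ℕ) : poch (-(n:ℂ)) (n+1) = 0 := by
  apply Finset.prod_eq_zero (Finset.self_mem_range_succ n)
  simp

lemma poch_two_thirds_ne (k : ℕ) : poch (2/3 : ℂ) k ≠ 0 := by
  apply Finset.prod_ne_zero_iff.mpr
  intro j _ h
  have h2 : ((2 + 3*j : ℕ) : ℂ) = 0 := by push_cast; linear_combination 3*h
  have := Nat.cast_eq_zero.mp h2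
  omega

lemma int_ne (a : ℤ) (h : a ≠ 0) : (a : ℂ) ≠ 0 := Int.cast_ne_zero.mpr h

/-- summand of Gessel–Stanton (5.23) -/
noncomputable def Fn (n k : ℕ) : ℂ :=
  poch (-(n : ℂ)) k * poch (-1 / 3 - 2 * (n : ℂ)) k /
    (poch (2 / 3) k * (k.factorial : ℂ)) * (-8 : ℂ) ^ k

/-- WZ certificate companion. -/
noncomputable def Gc (n k : ℕ) : ℂ :=
  -((k:ℂ) * (3*k-1) * (9*k - 21*n - 23)) * poch (-(n:ℂ)) (k-1)
      * poch (-1/3 - 2*(n:ℂ)) k /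
    ((6*(n:ℂ) + 4 - 3*k) * (6*(n:ℂ) + 7 - 3*k) * poch (2/3) k * (k.factorial : ℂ))
      * (-8:ℂ)^k

lemma key0 (n : ℕ) : Fn (n+1) 0 + 27 * Fn n 0 = Gc n 1 - Gc n 0 := by
  have ha : (6*(n:ℂ)+1) ≠ 0 := by
    intro h; apply int_ne (6*(n:ℤ)+1) (by omega); push_cast; linear_combination h
  have hb : (6*(n:ℂ)+4) ≠ 0 := by
    intro h; apply int_ne (6*(n:ℤ)+4) (by omega); push_cast; linear_combination h
  have hq1 : (24 + (n:ℂ)*180 + (n:ℂ)^2*216) ≠ 0 := by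
    intro h; apply mul_ne_zero (mul_ne_zero (by norm_num : (6:ℂ) ≠ 0) ha) hb
    linear_combination h
  simp only [Fn, Gc]
  norm_num [poch, Finset.prod_range_one, Nat.factorial]
  field_simp
  have e1 : ((n:ℂ) * 6 + 4 - 3) ≠ 0 := by intro h; apply ha; linear_combination h
  have e2 : ((n:ℂ) * 6 + 7 - 3) ≠ 0 := by intro h; apply hb; linear_combination h
  field_simp
  ring

lemma key1 (n : ℕ) : Fn (n+1) 1 + 27 * Fn n 1 = Gc n 2 - Gc n 1 := by
  have ha : (6*(n:ℂ)+1) ≠ 0 := by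
    intro h; apply int_ne (6*(n:ℤ)+1) (by omega); push_cast; linear_combination h
  have hb : (6*(n:ℂ)+4) ≠ 0 := by
    intro h; apply int_ne (6*(n:ℤ)+4) (by omega); push_cast; linear_combination h
  have hc : (6*(n:ℂ)-2) ≠ 0 := by
    intro h; apply int_ne (6*(n:ℤ)-2) (by omega); push_cast; linear_combination h
  have hq1 : (24 + (n:ℂ)*180 + (n:ℂ)^2*216) ≠ 0 := by
    intro h; apply mul_ne_zero (mul_ne_zero (by norm_num : (6:ℂ) ≠ 0) ha) hb
    linear_combination h
  have hq2 : (-360 - (n:ℂ)*1080 + (n:ℂ)^2*6480) ≠ 0 := by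
    intro h; apply mul_ne_zero (mul_ne_zero (by norm_num : (180:ℂ) ≠ 0) hc) ha
    linear_combination h
  simp only [Fn, Gc]
  norm_num [poch, Finset.prod_range_succ, Finset.prod_range_one, Nat.factorial]
  field_simp
  have e1 : ((n:ℂ) * 6 + 4 - 3) ≠ 0 := by intro h; apply ha; linear_combination h
  have e2 : ((n:ℂ) * 6 + 7 - 3) ≠ 0 := by intro h; apply hb; linear_combination h
  have e3 : ((n:ℂ) * 6 + 4 - 6) ≠ 0 := by intro h; apply hc; linear_combination h
  have e4 : ((n:ℂ) * 6 + 7 - 6) ≠ 0 := by intro h; apply ha; linear_combination h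
  field_simp
  ring

set_option maxHeartbeats 1000000 in
lemma key (n k : ℕ) : Fn (n+1) k + 27 * Fn n k = Gc n (k+1) - Gc n k := by
  match k with
  | 0 => exact key0 n
  | 1 => exact key1 n
  | (m+2) =>
    have EA1 : poch (-(n:ℂ)) (m+1) = poch (-(n:ℂ)) m * (-(n:ℂ)+m) := poch_succ _ m
    have EA2 : poch (-(n:ℂ)) (m+2) = poch (-(n:ℂ)) m * (-(n:ℂ)+m) * (-(n:ℂ)+m+1) := by
      rw [show m+2 = (m+1)+1 by omega, poch_succ, EA1]; push_cast; ring
    have EN : poch (-((n:ℂ)+1)) (m+2) = -((n:ℂ)+1) * (poch (-(n:ℂ)) m * (-(n:ℂ)+m)) := by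
      rw [show (-((n:ℂ)+1)) = (-(n:ℂ)) - 1 by ring, show m+2 = (m+1)+1 by omega,
        poch_pred, EA1]
    have EB2 : poch (-1/3 - 2*(n:ℂ)) (m+2) = poch (-1/3 - 2*(n:ℂ)) m * ((-1/3 - 2*(n:ℂ))+m) * ((-1/3 - 2*(n:ℂ))+m+1) := by
      rw [show m+2 = (m+1)+1 by omega, poch_succ, poch_succ]; push_cast; ring
    have EB3 : poch (-1/3 - 2*(n:ℂ)) (m+2+1) = poch (-1/3 - 2*(n:ℂ)) m * ((-1/3 - 2*(n:ℂ))+m) * ((-1/3 - 2*(n:ℂ))+m+1) * ((-1/3 - 2*(n:ℂ))+m+2) := by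
      rw [poch_succ, EB2]; push_cast; ring
    have EBm : poch ((-1/3 - 2*(n:ℂ)) - 2) (m+2) = ((-1/3 - 2*(n:ℂ))-2) * ((-1/3 - 2*(n:ℂ))-1) * poch (-1/3 - 2*(n:ℂ)) m := by
      rw [show (-1/3 - 2*(n:ℂ)) - 2 = ((-1/3 - 2*(n:ℂ))-1)-1 by ring, show m+2 = (m+1)+1 by omega,
        poch_pred, poch_pred]; ring
    have EC2 : poch (2/3 : ℂ) (m+2) = poch (2/3:ℂ) m * (2/3+m) * (2/3+m+1) := by
      rw [show m+2 = (m+1)+1 by omega, poch_succ, poch_succ]; push_cast; ring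
    have EC3 : poch (2/3 : ℂ) (m+2+1) = poch (2/3:ℂ) m * (2/3+m) * (2/3+m+1) * (2/3+m+2) := by
      rw [poch_succ, EC2]; push_cast; ring
    have Ef2 : (((m+2).factorial : ℕ) : ℂ) = (m.factorial : ℂ) * ((m:ℂ)+1) * ((m:ℂ)+2) := by
      rw [show m+2 = (m+1)+1 by omega, Nat.factorial_succ, Nat.factorial_succ]
      push_cast; ring
    have Ef3 : (((m+2+1).factorial : ℕ) : ℂ)
        = (m.factorial : ℂ) * ((m:ℂ)+1) * ((m:ℂ)+2) * ((m:ℂ)+3) := by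
      rw [Nat.factorial_succ]; push_cast [Ef2]; ring
    have hcast : ((m+2+1 : ℕ) : ℂ) = (m:ℂ)+3 := by push_cast; ring
    have hcast2 : ((m+2 : ℕ) : ℂ) = (m:ℂ)+2 := by push_cast; ring
    have hcast3 : ((n+1 : ℕ) : ℂ) = (n:ℂ)+1 := by push_cast; ring
    have hB' : -1/3 - 2*((n:ℂ)+1) = (-1/3 - 2*(n:ℂ)) - 2 := by ring
    simp only [Fn, Gc, show m+2+1-1 = m+2 by omega, show m+2-1 = m+1 by omega,
      hcast, hcast2, hcast3, hB', EA1, EA2, EN, EB2, EB3, EBm, EC2, EC3, Ef2, Ef3]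
    have hC : poch (2/3 : ℂ) m ≠ 0 := poch_two_thirds_ne m
    have hfac : ((m.factorial : ℂ)) ≠ 0 := Nat.cast_ne_zero.mpr m.factorial_ne_zero
    have hm1 : ((m:ℂ) + 1) ≠ 0 := by
      intro h; apply int_ne ((m:ℤ)+1) (by omega); push_cast; linear_combination h
    have hm2 : ((m:ℂ) + 2) ≠ 0 := by
      intro h; apply int_ne ((m:ℤ)+2) (by omega); push_cast; linear_combination h
    have hm3 : ((m:ℂ) + 3) ≠ 0 := by
      intro h; apply int_ne ((m:ℤ)+3) (by omega); push_cast; linear_combination h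
    have hd1' : (6*(n:ℂ) + 4 - 3*((m:ℂ)+2)) ≠ 0 := by
      intro h; apply int_ne (6*(n:ℤ) - 3*m - 2) (by omega); push_cast; linear_combination h
    have hd2' : (6*(n:ℂ) + 7 - 3*((m:ℂ)+2)) ≠ 0 := by
      intro h; apply int_ne (6*(n:ℤ) - 3*m + 1) (by omega); push_cast; linear_combination h
    have hd3' : (6*(n:ℂ) + 4 - 3*((m:ℂ)+3)) ≠ 0 := by
      intro h; apply int_ne (6*(n:ℤ) - 3*m - 5) (by omega); push_cast; linear_combination h
    have hd4' : (6*(n:ℂ) + 7 - 3*((m:ℂ)+3)) ≠ 0 := by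
      intro h; apply int_ne (6*(n:ℤ) - 3*m - 2) (by omega); push_cast; linear_combination h
    have h23a : ((2:ℂ)/3 + m) ≠ 0 := by
      intro h; apply int_ne (3*(m:ℤ)+2) (by omega); push_cast; linear_combination 3*h
    have h23b : ((2:ℂ)/3 + m + 1) ≠ 0 := by
      intro h; apply int_ne (3*(m:ℤ)+5) (by omega); push_cast; linear_combination 3*h
    have h23c : ((2:ℂ)/3 + m + 2) ≠ 0 := by
      intro h; apply int_ne (3*(m:ℤ)+8) (by omega); push_cast; linear_combination 3*h
    generalize hPg : poch (-(n:ℂ)) m = P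
    generalize hQg : poch (-1/3 - 2*(n:ℂ)) m = Q
    generalize hCg : poch (2/3 : ℂ) m = C
    rw [hCg] at hC
    simp only [div_mul_eq_mul_div, mul_div_assoc']
    rw [← add_div]
    rw [div_sub_div _ _
      (mul_ne_zero (mul_ne_zero (mul_ne_zero hd3' hd4')
        (mul_ne_zero (mul_ne_zero (mul_ne_zero hC h23a) h23b) h23c))
        (mul_ne_zero (mul_ne_zero (mul_ne_zero hfac hm1) hm2) hm3))
      (mul_ne_zero (mul_ne_zero (mul_ne_zero hd1' hd2')
        (mul_ne_zero (mul_ne_zero hC h23a) h23b))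
        (mul_ne_zero (mul_ne_zero hfac hm1) hm2))]
    rw [div_eq_div_iff
      (mul_ne_zero (mul_ne_zero (mul_ne_zero hC h23a) h23b)
        (mul_ne_zero (mul_ne_zero hfac hm1) hm2))
      (mul_ne_zero
        (mul_ne_zero (mul_ne_zero (mul_ne_zero hd3' hd4')
          (mul_ne_zero (mul_ne_zero (mul_ne_zero hC h23a) h23b) h23c))
          (mul_ne_zero (mul_ne_zero (mul_ne_zero hfac hm1) hm2) hm3))
        (mul_ne_zero (mul_ne_zero (mul_ne_zero hd1' hd2')
          (mul_ne_zero (mul_ne_zero hC h23a) h23b))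
          (mul_ne_zero (mul_ne_zero hfac hm1) hm2)))]
    ring

lemma Gc_zero (n : ℕ) : Gc n 0 = 0 := by simp [Gc]

lemma Gc_top (n : ℕ) : Gc n (n+2) = 0 := by
  have h : n + 2 - 1 = n + 1 := by omega
  simp [Gc, h, poch_neg_nat]

lemma Fn_top (n : ℕ) : Fn n (n+1) = 0 := by
  simp [Fn, poch_neg_nat]

lemma main_all (n : ℕ) :
    ∑ k ∈ Finset.range (n + 1), Fn n k = (-27 : ℂ) ^ n := by
  induction n with
  | zero => simp [Fn, poch_zero]
  | succ n ih =>
    have htel : ∑ k ∈ Finset.range (n+2), (Gc n (k+1) - Gc n k) = 0 := by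
      rw [Finset.sum_range_sub (Gc n), Gc_top, Gc_zero, sub_zero]
    have hsum : ∑ k ∈ Finset.range (n+2), (Fn (n+1) k + 27 * Fn n k) = 0 := by
      rw [← htel]; exact Finset.sum_congr rfl fun k _ => key n k
    rw [Finset.sum_add_distrib, ← Finset.mul_sum] at hsum
    have h2 : ∑ k ∈ Finset.range (n+2), Fn n k = (-27:ℂ)^n := by
      rw [Finset.sum_range_succ, Fn_top, add_zero, ih]
    rw [h2] at hsum
    have h3 : ∑ k ∈ Finset.range (n+2), Fn (n+1) k = -27 * (-27:ℂ)^n := by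
      linear_combination hsum
    rw [h3, pow_succ]
    ring

/-- Gessel–Stanton (5.23). -/
theorem gessel_stanton_5_23 (n : ℕ) (hn : 1 ≤ n) :
    ∑ k ∈ Finset.range (n + 1),
        poch (-(n : ℂ)) k * poch (-1 / 3 - 2 * (n : ℂ)) k /
          (poch (2 / 3) k * (k.factorial : ℂ)) * (-8 : ℂ) ^ k
      = (-27 : ℂ) ^ n := main_all n
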